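/- Let n ≥ 3. Suppose X : Fin n → MvPolynomial (Fin n) ℂ and μ ∈ MvPolynomial (Fin n) ℂ satisfy, for all i j : Fin n, pderiv i (X j) + pderiv j (X i) = if i = j then μ else 0. Then there exist unique a b : Fin n → ℂ, c : ℂ, and a matrix A : Matrix (Fin n) (Fin n) ℂ with A j i = −A i j for all i j, such that for every j: X j = C (a j) + (∑ i, C (A j i) * X_poly i) + C c * X_poly j + 2 * (∑ i, C (b i) * X_poly i) * X_poly j − (∑ i, (X_poly i)^2) * C (b j), where X_poly i denotes the variable MvPolynomial.X i and C the constant embedding. -/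

import Mathlib

/-!
Differentiating the conformal Killing equation `∂ᵢXⱼ + ∂ⱼXᵢ = μ δᵢⱼ` and combining three instances
of it gives `2 ∂ᵢ∂ⱼXₖ = δⱼₖ ∂ᵢμ + δᵢₖ ∂ⱼμ - δᵢⱼ ∂ₖμ`. Differentiating once more and comparing the
two orders of differentiation, the Hessian of `μ` vanishes as soon as there are three coordinates,
so `μ = m + 4 ∑ bᵢ xᵢ`. Subtracting the special conformal field with parameter `b` leaves a
conformal Killing field with constant factor `m`, whose second derivatives vanish by the same
identity: it is affine, with linear part `m/2` times the identity plus a skew matrix. The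
parameters are recovered from the constant term, the first derivatives and `∂ⱼ∂ⱼXⱼ = 2 bⱼ`,
which gives uniqueness.
-/

open MvPolynomial

namespace MvPolynomial

variable {R σ : Type*}

section CommSemiring

variable [CommSemiring R]

theorem pderiv_pderiv_comm (i j : σ) (f : MvPolynomial σ R) :
    pderiv i (pderiv j f) = pderiv j (pderiv i f) := by
  classical
  ext m
  simp only [coeff_pderiv, add_right_comm m, Finsupp.add_apply, Finsupp.single_apply]
  by_cases h : i = j
  · subst h; rfl
  · simp only [if_neg h, if_neg (Ne.symm h), add_zero]
    ring

theorem eq_C_constantCoeff_of_pderiv_eq_zero [IsAddTorsionFree R] {f : MvPolynomial σ R}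
    (h : ∀ i, pderiv i f = 0) : f = C (constantCoeff f) := by
  classical
  ext m
  rcases eq_or_ne m 0 with rfl | hm
  · simp [constantCoeff_eq]
  obtain ⟨i, hi⟩ := Finsupp.ne_iff.1 hm
  have hle : Finsupp.single i 1 ≤ m := Finsupp.single_le_iff.2 (Nat.one_le_iff_ne_zero.2 hi)
  have hcoeff := coeff_pderiv (i := i) f (m - Finsupp.single i 1)
  rw [h i, coeff_zero, tsub_add_cancel_of_le hle, mul_comm, ← Nat.cast_succ,
    ← nsmul_eq_mul] at hcoeff
  rw [coeff_C, if_neg (Ne.symm hm)]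
  exact (smul_eq_zero.1 hcoeff.symm).resolve_left (Nat.add_one_ne_zero _)

variable [Fintype σ] [DecidableEq σ]

theorem pderiv_sum_C_mul_X (v : σ → R) (k : σ) :
    pderiv k (∑ i, C (v i) * X i) = C (v k) := by
  simp [pderiv_X, Pi.single_apply]

theorem pderiv_sum_X_sq (k : σ) : pderiv k (∑ i, X i ^ 2 : MvPolynomial σ R) = 2 * X k := by
  simp [pderiv_X, Pi.single_apply]

end CommSemiring

theorem eq_C_add_sum_of_pderiv_pderiv_eq_zero [CommRing R] [IsAddTorsionFree R] [Fintype σ]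
    [DecidableEq σ] {f : MvPolynomial σ R} (h : ∀ i j, pderiv i (pderiv j f) = 0) :
    f = C (constantCoeff f) + ∑ i, C (constantCoeff (pderiv i f)) * X i := by
  set g := C (constantCoeff f) + ∑ i, C (constantCoeff (pderiv i f)) * X i
  have hderiv : ∀ i, pderiv i (f - g) = 0 := fun i => by
    rw [map_sub, map_add, pderiv_C, pderiv_sum_C_mul_X, zero_add, sub_eq_zero]
    exact eq_C_constantCoeff_of_pderiv_eq_zero fun j => h j i
  have hconst := eq_C_constantCoeff_of_pderiv_eq_zero hderiv
  simpa [g, sub_eq_zero] using hconst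

end MvPolynomial

theorem Fintype.exists_ne_ne_of_two_lt_card {α : Type*} [Fintype α] [DecidableEq α]
    (h : 2 < Fintype.card α) (a b : α) : ∃ c, c ≠ a ∧ c ≠ b := by
  obtain ⟨c, -, hc⟩ := Finset.exists_mem_notMem_of_card_lt_card
    ((Finset.card_le_two (a := a) (b := b)).trans_lt (h.trans_eq Finset.card_univ.symm))
  simp only [Finset.mem_insert, Finset.mem_singleton, not_or] at hc
  exact ⟨c, hc⟩

section CommRing

variable {R σ : Type*} [CommRing R] [DecidableEq σ]

def IsConformalKilling (X : σ → MvPolynomial σ R) (μ : MvPolynomial σ R) : Prop :=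
  ∀ i j, pderiv i (X j) + pderiv j (X i) = if i = j then μ else 0

namespace IsConformalKilling

variable {X Y : σ → MvPolynomial σ R} {μ ν : MvPolynomial σ R}

theorem sub (hX : IsConformalKilling X μ) (hY : IsConformalKilling Y ν) :
    IsConformalKilling (X - Y) (μ - ν) := fun i j => by
  rw [Pi.sub_apply, Pi.sub_apply, map_sub, map_sub, sub_add_sub_comm, hX i j, hY i j]
  split_ifs <;> simp

theorem two_mul_pderiv_pderiv (h : IsConformalKilling X μ) (i j k : σ) :
    2 * pderiv i (pderiv j (X k)) =
      (if j = k then pderiv i μ else 0) + (if i = k then pderiv j μ else 0)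
        - (if i = j then pderiv k μ else 0) := by
  have hi := congrArg (pderiv i) (h j k)
  have hj := congrArg (pderiv j) (h i k)
  have hk := congrArg (pderiv k) (h i j)
  simp only [map_add, apply_ite (pderiv _), map_zero] at hi hj hk
  linear_combination hi + hj - hk - pderiv_pderiv_comm i k (X j)
    - pderiv_pderiv_comm j k (X i) - pderiv_pderiv_comm j i (X k)

/-- Both sides are `2 ∂ₗ∂ᵢ∂ⱼXₖ`, expanded with the derivatives taken in the two orders. -/
theorem hessian_relation (h : IsConformalKilling X μ) (l i j k : σ) :
    (if j = k then pderiv l (pderiv i μ) else 0) + (if i = k then pderiv l (pderiv j μ) else 0)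
        - (if i = j then pderiv l (pderiv k μ) else 0) =
      (if j = k then pderiv i (pderiv l μ) else 0) + (if l = k then pderiv i (pderiv j μ) else 0)
        - (if l = j then pderiv i (pderiv k μ) else 0) := by
  have hl := congrArg (pderiv l) (h.two_mul_pderiv_pderiv i j k)
  have hi := congrArg (pderiv i) (h.two_mul_pderiv_pderiv l j k)
  simp only [two_mul, map_add, map_sub, apply_ite (pderiv _), map_zero] at hl hi
  linear_combination hi - hl + 2 * pderiv_pderiv_comm l i (pderiv j (X k))

end IsConformalKilling

variable [Fintype σ]

/-- The parameters `(a, b, c, A)` are the translation, the special conformal transformation, the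
dilation and the rotation (for skew `A`). -/
noncomputable def conformalField :
    ((σ → R) × (σ → R) × R × Matrix σ σ R) →ₗ[R] σ → MvPolynomial σ R where
  toFun p j := C (p.1 j) + (∑ i, C (p.2.2.2 j i) * X i) + C p.2.2.1 * X j
    + 2 * (∑ i, C (p.2.1 i) * X i) * X j - (∑ i, X i ^ 2) * C (p.2.1 j)
  map_add' p q := by
    ext1 j
    simp only [Prod.fst_add, Prod.snd_add, Pi.add_apply, Matrix.add_apply, map_add, add_mul,
      Finset.sum_add_distrib]
    ring
  map_smul' r p := by
    ext1 j
    simp only [Prod.smul_fst, Prod.smul_snd, Pi.smul_apply, Matrix.smul_apply, smul_eq_mul,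
      map_mul, RingHom.id_apply, smul_eq_C_mul, mul_assoc, ← Finset.mul_sum]
    ring

theorem pderiv_conformalField (a b : σ → R) (c : R) (A : Matrix σ σ R) (k j : σ) :
    pderiv k (conformalField (a, b, c, A) j) =
      C (A j k) + (if k = j then C c + 2 * ∑ i, C (b i) * X i else 0)
        + 2 * C (b k) * X j - 2 * X k * C (b j) := by
  simp only [conformalField, LinearMap.coe_mk, AddHom.coe_mk, two_mul, map_add, map_sub,
    pderiv_mul, pderiv_C, pderiv_sum_C_mul_X, pderiv_sum_X_sq, pderiv_X, Pi.single_apply]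
  by_cases hkj : k = j
  · subst hkj
    simp only [↓reduceIte]
    ring
  · simp only [if_neg hkj, if_neg (Ne.symm hkj)]
    ring

theorem isConformalKilling_conformalField (a b : σ → R) (c : R) {A : Matrix σ σ R}
    (hA : ∀ i j, A j i = -A i j) :
    IsConformalKilling (conformalField (a, b, c, A)) (C (2 * c) + 4 * ∑ i, C (b i) * X i) := by
  intro i j
  rw [pderiv_conformalField, pderiv_conformalField, hA]
  by_cases hij : i = j
  · subst hij
    simp only [↓reduceIte, map_neg, map_mul, map_ofNat]
    ring
  · simp only [if_neg hij, if_neg (Ne.symm hij), map_neg]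
    ring

theorem eq_zero_of_conformalField_eq_zero [Nonempty σ] [IsAddTorsionFree R]
    {p : (σ → R) × (σ → R) × R × Matrix σ σ R} (hA : ∀ i j, p.2.2.2 j i = -p.2.2.2 i j)
    (h : conformalField p = 0) : p = 0 := by
  obtain ⟨a, b, c, A⟩ := p
  have hF : ∀ j, conformalField (a, b, c, A) j = 0 := congrFun h
  have ha : a = 0 := funext fun j => by
    simpa [conformalField] using congrArg constantCoeff (hF j)
  have hlin : ∀ k j, A j k + (if k = j then c else 0) = 0 := fun k j => by
    have := congrArg (fun f => constantCoeff (pderiv k f)) (hF j)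
    simpa [pderiv_conformalField, apply_ite constantCoeff] using this
  have hb : b = 0 := funext fun j => by
    have := congrArg (fun f => pderiv j (pderiv j f)) (hF j)
    simp only [pderiv_conformalField, ↓reduceIte, two_mul, map_add, map_sub, pderiv_mul,
      pderiv_C, pderiv_sum_C_mul_X, pderiv_X_self, map_zero] at this
    have hbb : (C (b j + b j) : MvPolynomial σ R) = 0 := by
      rw [map_add]
      linear_combination this
    exact self_eq_neg.mp (eq_neg_of_add_eq_zero_left (C_eq_zero.1 hbb))
  obtain ⟨j₀⟩ := ‹Nonempty σ›
  have hdiag : A j₀ j₀ = 0 := self_eq_neg.mp (hA j₀ j₀)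
  have hc : c = 0 := by simpa [hdiag] using hlin j₀ j₀
  have hA0 : A = 0 := by
    ext j k
    simpa [hc] using hlin k j
  simp [ha, hb, hc, hA0]

theorem eq_of_conformalField_eq [Nonempty σ] [IsAddTorsionFree R]
    {p q : (σ → R) × (σ → R) × R × Matrix σ σ R} (hp : ∀ i j, p.2.2.2 j i = -p.2.2.2 i j)
    (hq : ∀ i j, q.2.2.2 j i = -q.2.2.2 i j) (h : conformalField p = conformalField q) :
    p = q := by
  refine sub_eq_zero.1 (eq_zero_of_conformalField_eq_zero (fun i j => ?_) ?_)
  · simp only [Prod.snd_sub, Matrix.sub_apply, hp i j, hq i j]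
    ring
  · rw [map_sub, h, sub_self]

end CommRing

section Field

variable {K σ : Type*} [Field K] [CharZero K] [DecidableEq σ]

namespace IsConformalKilling

variable {X : σ → MvPolynomial σ K} {μ : MvPolynomial σ K}

theorem pderiv_pderiv_factor_eq_zero (h : IsConformalKilling X μ)
    (h3 : ∀ a b : σ, ∃ i, i ≠ a ∧ i ≠ b) (a b : σ) : pderiv a (pderiv b μ) = 0 := by
  have offdiag : ∀ a b : σ, a ≠ b → pderiv a (pderiv b μ) = 0 := fun a b hab => by
    obtain ⟨i, hia, hib⟩ := h3 a b
    simpa [hia, hib, hab, Ne.symm hia, Ne.symm hib] using h.hessian_relation a i b i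
  have antidiag : ∀ x y : σ, x ≠ y → pderiv y (pderiv y μ) = -pderiv x (pderiv x μ) :=
    fun x y hxy => by
      have := h.hessian_relation y x y x
      simp only [↓reduceIte, if_neg hxy, if_neg (Ne.symm hxy)] at this
      linear_combination this
  rcases eq_or_ne a b with rfl | hab
  · obtain ⟨i, hia, -⟩ := h3 a a
    obtain ⟨j, hji, hja⟩ := h3 i a
    have : 2 * pderiv a (pderiv a μ) = 0 := by
      linear_combination antidiag i a hia + antidiag j a hja - antidiag j i hji
    simpa using this
  · exact offdiag a b hab

theorem exists_eq_conformalField_of_pderiv_eq_zero [Fintype σ] (h : IsConformalKilling X μ)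
    (hμ : ∀ i, pderiv i μ = 0) :
    ∃ p : (σ → K) × (σ → K) × K × Matrix σ σ K,
      (∀ i j, p.2.2.2 j i = -p.2.2.2 i j) ∧ X = conformalField p := by
  have hX2 : ∀ i j k, pderiv i (pderiv j (X k)) = 0 := fun i j k => by
    simpa [hμ] using h.two_mul_pderiv_pderiv i j k
  set L : Matrix σ σ K := fun k i => constantCoeff (pderiv i (X k))
  have hdX : ∀ i k, pderiv i (X k) = C (L k i) := fun i k =>
    eq_C_constantCoeff_of_pderiv_eq_zero fun j => hX2 j i k
  have hL : ∀ i j, L j i + L i j = if i = j then constantCoeff μ else 0 := fun i j => by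
    simpa [hdX, apply_ite constantCoeff] using congrArg constantCoeff (h i j)
  refine ⟨(fun k => constantCoeff (X k), 0, constantCoeff μ / 2, L - (constantCoeff μ / 2) • 1),
    fun i j => ?_, funext fun k => ?_⟩
  · have hLij := hL i j
    by_cases hij : i = j
    · subst hij
      simp only [↓reduceIte] at hLij
      simp only [Matrix.sub_apply, Matrix.smul_apply, Matrix.one_apply_eq, smul_eq_mul, mul_one,
        neg_sub]
      linear_combination hLij
    · simp only [if_neg hij] at hLij
      simp only [Matrix.sub_apply, Matrix.smul_apply, Matrix.one_apply_ne hij,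
        Matrix.one_apply_ne (Ne.symm hij), smul_eq_mul, mul_zero, sub_zero]
      linear_combination hLij
  · rw [eq_C_add_sum_of_pderiv_pderiv_eq_zero fun i j => hX2 i j k]
    simp only [conformalField, LinearMap.coe_mk, AddHom.coe_mk, Matrix.sub_apply,
      Matrix.smul_apply, Matrix.one_apply, smul_eq_mul, mul_ite, mul_one, mul_zero, map_sub,
      sub_mul, Finset.sum_sub_distrib, apply_ite C, map_zero, ite_mul, zero_mul,
      Finset.sum_ite_eq, Finset.mem_univ, ↓reduceIte, Pi.zero_apply, Finset.sum_const_zero]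
    ring

end IsConformalKilling

end Field

/-- The degree-zero part of the derived conformal algebra of flat complex `n`-space, `n ≥ 3`:
every polynomial conformal Killing field `X` (i.e. `∂ᵢXⱼ + ∂ⱼXᵢ = μ δᵢⱼ` for some polynomial
`μ`) is uniquely of the form translation + rotation + dilation + special conformal
transformation. -/
theorem flat_conformal_killing_classification (n : ℕ) (hn : 3 ≤ n)
    (X : Fin n → MvPolynomial (Fin n) ℂ) (μ : MvPolynomial (Fin n) ℂ)
    (hkill : ∀ i j : Fin n,
      pderiv i (X j) + pderiv j (X i) = if i = j then μ else 0) :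
    ∃! p : (Fin n → ℂ) × (Fin n → ℂ) × ℂ × Matrix (Fin n) (Fin n) ℂ,
      (∀ i j : Fin n, p.2.2.2 j i = -p.2.2.2 i j) ∧
      ∀ j : Fin n,
        X j = C (p.1 j) + (∑ i, C (p.2.2.2 j i) * MvPolynomial.X i)
          + C p.2.2.1 * MvPolynomial.X j
          + 2 * (∑ i, C (p.2.1 i) * MvPolynomial.X i) * MvPolynomial.X j
          - (∑ i, (MvPolynomial.X i) ^ 2) * C (p.2.1 j) := by
  have hX : IsConformalKilling X μ := hkill
  have hhess := hX.pderiv_pderiv_factor_eq_zero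
    (Fintype.exists_ne_ne_of_two_lt_card (by rw [Fintype.card_fin]; omega))
  set b : Fin n → ℂ := fun i => constantCoeff (pderiv i μ) / 4
  have hspecial := isConformalKilling_conformalField 0 b 0 (A := 0) fun _ _ => by simp
  have hconst : ∀ i, pderiv i (μ - (C (2 * 0) + 4 * ∑ k, C (b k) * MvPolynomial.X k)) = 0 :=
    fun i => by
      rw [map_sub, map_add, pderiv_C, zero_add, ← map_ofNat C 4, pderiv_C_mul,
        pderiv_sum_C_mul_X, ← C_mul, eq_C_constantCoeff_of_pderiv_eq_zero fun j => hhess j i,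
        sub_eq_zero, mul_div_cancel₀ _ (by norm_num)]
  obtain ⟨q, hq, hY⟩ := (hX.sub hspecial).exists_eq_conformalField_of_pderiv_eq_zero hconst
  have hXq : X = conformalField (q + (0, b, 0, 0)) := by rw [map_add, ← hY, sub_add_cancel]
  have hskew : ∀ i j, (q + (0, b, 0, 0)).2.2.2 j i = -(q + (0, b, 0, 0)).2.2.2 i j :=
    fun i j => by simpa using hq i j
  refine ⟨q + (0, b, 0, 0), ⟨hskew, fun j => congrFun hXq j⟩, ?_⟩
  rintro p ⟨hp, hpX⟩
  have : Nonempty (Fin n) := ⟨⟨0, by omega⟩⟩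
  refine eq_of_conformalField_eq hp hskew ?_
  rw [← hXq]
  exact (funext hpX).symm
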